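/- arXiv:1312.6794 — 3 statements merged into one kernel-verified Lean document; each statement's English description precedes it below -/
import Mathlib

section
/- Let G be a group and f : G → G a group endomorphism with f ∘ f = f. Then the operation x ∘_f y = f(x y⁻¹) x satisfies the left self-distributivity law x ∘_f (y ∘_f z) = (x ∘_f y) ∘_f (x ∘_f z) for all x, y, z ∈ G. -/
/-! Writing `x ∘_f y = f x * (f y)⁻¹ * x`, the right argument enters only through `f y`, and
idempotence gives `f (x ∘_f y) = f x * (f y)⁻¹ * f x`: on the image of `f` the operation is the
core `a b⁻¹ a` of the group, which is left self-distributive. -/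

namespace MonoidHom

variable {G : Type*} [Group G] (f : G →* G)

def symConj (x y : G) : G := f (x * y⁻¹) * x

theorem symConj_eq (x y : G) : f.symConj x y = f x * (f y)⁻¹ * x := by
  rw [symConj, map_mul, map_inv]

theorem map_symConj (hf : ∀ x, f (f x) = f x) (x y : G) :
    f (f.symConj x y) = f x * (f y)⁻¹ * f x := by
  rw [symConj_eq, map_mul, map_mul, map_inv, hf, hf]

theorem symConj_self_distrib (hf : ∀ x, f (f x) = f x) (x y z : G) :
    f.symConj x (f.symConj y z) = f.symConj (f.symConj x y) (f.symConj x z) := by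
  rw [symConj_eq f x, symConj_eq f (f.symConj x y), map_symConj f hf, map_symConj f hf,
    map_symConj f hf, symConj_eq f x y]
  group

end MonoidHom

theorem f_symmetric_conjugacy_LD {G : Type*} [Group G] (f : G →* G)
    (hf : ∀ x, f (f x) = f x) (x y z : G) :
    (fun a b => f (a * b⁻¹) * a) x ((fun a b => f (a * b⁻¹) * a) y z) =
      (fun a b => f (a * b⁻¹) * a) ((fun a b => f (a * b⁻¹) * a) x y)
        ((fun a b => f (a * b⁻¹) * a) x z) :=
  f.symConj_self_distrib hf x y z
end

section
/- Let L be a set with families of operations O_A, O_B such that each pair in O_A × O_B is mutually left distributive. Let α be an iterated left multiplication map built from elements of L and operations in O_A, and let β be an iterated left multiplication map built from elements b₁,…,b_{k_B} ∈ L and operations *_{B₁},…,*_{B_{k_B}} ∈ O_B. Then for every a₀ ∈ L: α(b_{k_B}) *_{B_{k_B}} (α(b_{k_B−1}) *_{B_{k_B−1}} (⋯ (α(b₁) *_{B₁} α(a₀))⋯)) = α(β(a₀)). In particular, Alice's shared key K_A = α(β(a₀)) equals Bob's shared key K_B in the non-associative key establishment protocol. -/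
/-! Bob's key is `β` computed after transporting the public data `b_i` through `α`. Every left
multiplication by an element through an operation of `O_A` is an endomorphism of each operation
of `O_B` by left distributivity, hence so is their composite `α`; and an endomorphism `f` of the
operations used by `β` satisfies `f (β y) = β_f (f y)`, where `β_f` uses the elements `f b_i`. -/

/-- Iterated left multiplication: given a list `[(x₁, *₁), …, (x_k, *_k)]`,
`iterLeftMul l y = x_k *_k (… (x₂ *₂ (x₁ *₁ y)) …)`. -/
def iterLeftMul {L : Type*} (l : List (L × (L → L → L))) (y : L) : L :=
  l.foldl (fun acc p => p.2 p.1 acc) y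

section IterLeftMul

variable {L : Type*}

@[simp]
lemma iterLeftMul_cons (p : L × (L → L → L)) (l : List (L × (L → L → L))) (y : L) :
    iterLeftMul (p :: l) y = iterLeftMul l (p.2 p.1 y) := rfl

lemma iterLeftMul_map_op {l : List (L × (L → L → L))} {op : L → L → L}
    (hl : ∀ p ∈ l, ∀ y z, p.2 p.1 (op y z) = op (p.2 p.1 y) (p.2 p.1 z)) (y z : L) :
    iterLeftMul l (op y z) = op (iterLeftMul l y) (iterLeftMul l z) := by
  induction l generalizing y z with
  | nil => rfl
  | cons p l ih =>
    simp only [iterLeftMul_cons, hl p List.mem_cons_self]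
    exact ih (fun q hq => hl q (List.mem_cons_of_mem _ hq)) _ _

lemma iterLeftMul_map_apply {f : L → L} {l : List (L × (L → L → L))}
    (hf : ∀ p ∈ l, ∀ y, f (p.2 p.1 y) = p.2 (f p.1) (f y)) (y : L) :
    iterLeftMul (l.map fun p => (f p.1, p.2)) (f y) = f (iterLeftMul l y) := by
  induction l generalizing y with
  | nil => rfl
  | cons p l ih =>
    simp only [List.map_cons, iterLeftMul_cons, ← hf p List.mem_cons_self]
    exact ih (fun q hq => hf q (List.mem_cons_of_mem _ hq)) _

end IterLeftMul

theorem shared_key_agreement_general {L : Type*}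
    (OA OB : Set (L → L → L))
    (hab : ∀ sa ∈ OA, ∀ sb ∈ OB, ∀ x y z : L, sa x (sb y z) = sb (sa x y) (sa x z))
    (la : List (L × (L → L → L))) (hla : ∀ p ∈ la, p.2 ∈ OA)
    (lb : List (L × (L → L → L))) (hlb : ∀ p ∈ lb, p.2 ∈ OB)
    (a₀ : L) :
    iterLeftMul (lb.map (fun p => (iterLeftMul la p.1, p.2))) (iterLeftMul la a₀) =
      iterLeftMul la (iterLeftMul lb a₀) := by
  have hα : ∀ p ∈ lb, ∀ y,
      iterLeftMul la (p.2 p.1 y) = p.2 (iterLeftMul la p.1) (iterLeftMul la y) :=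
    fun p hp y => iterLeftMul_map_op (fun q hq => hab q.2 (hla q hq) p.2 (hlb p hp) q.1) p.1 y
  exact iterLeftMul_map_apply hα a₀

/-- Correctness of the non-associative key establishment protocol:
Bob's key `K_B = α(b_{k_B}) *_{B_{k_B}} (⋯ (α(b₁) *_{B₁} α(a₀)) ⋯)` equals
Alice's key `K_A = α(β(a₀))`, where `α` is an iterated left multiplication
over `O_A` and `β` the one determined by the list `lb` over `O_B`. -/
theorem shared_key_agreement {L : Type*}
    (OA OB : Set (L → L → L))
    (hab : ∀ sa ∈ OA, ∀ sb ∈ OB, ∀ x y z : L, sa x (sb y z) = sb (sa x y) (sa x z))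
    (hba : ∀ sa ∈ OA, ∀ sb ∈ OB, ∀ x y z : L, sb x (sa y z) = sa (sb x y) (sb x z))
    (la : List (L × (L → L → L))) (hla : ∀ p ∈ la, p.2 ∈ OA)
    (lb : List (L × (L → L → L))) (hlb : ∀ p ∈ lb, p.2 ∈ OB)
    (a₀ : L) :
    iterLeftMul (lb.map (fun p => (iterLeftMul la p.1, p.2))) (iterLeftMul la a₀) =
      iterLeftMul la (iterLeftMul lb a₀) :=
  shared_key_agreement_general OA OB hab la hla lb hlb a₀
end

section
/- In the braid group B_∞ with shift endomorphism ∂ (σ_i ↦ σ_{i+1}), the shifted conjugacy operation x * y = ∂x⁻¹ · σ₁ · ∂y · x satisfies the left self-distributivity law: x * (y * z) = (x * y) * (x * z) for all x, y, z ∈ B_∞. -/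
/-- The braid relations on infinitely many strands. The generator with index
`i : ℕ` represents `σ_{i+1}`, so indices `i, j` with `j ≥ i + 2` are far apart
and indices `i, i + 1` are adjacent. -/
def braidRels : Set (FreeGroup ℕ) :=
  {r | (∃ i j : ℕ, i + 2 ≤ j ∧
          r = FreeGroup.of i * FreeGroup.of j * (FreeGroup.of i)⁻¹ * (FreeGroup.of j)⁻¹) ∨
       (∃ i : ℕ,
          r = FreeGroup.of i * FreeGroup.of (i + 1) * FreeGroup.of i *
            (FreeGroup.of (i + 1) * FreeGroup.of i * FreeGroup.of (i + 1))⁻¹)}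

/-- The braid group `B_∞` on infinitely many strands. -/
abbrev BInf : Type := PresentedGroup braidRels

/-- The generator `σ_i` of `B_∞` (for `i ≥ 1`). -/
def sigma (i : ℕ) : BInf := PresentedGroup.of (i - 1)

theorem shift_aux : ∀ r ∈ braidRels,
    FreeGroup.lift (fun i => (PresentedGroup.of (i + 1) : BInf)) r = 1 := by
  have key : ∀ s ∈ braidRels, (PresentedGroup.mk braidRels s : BInf) = 1 := fun s hs =>
    (QuotientGroup.eq_one_iff _).mpr (Subgroup.subset_normalClosure hs)
  rintro r (⟨i, j, hij, rfl⟩ | ⟨i, rfl⟩)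
  · have := key _ (Or.inl ⟨i + 1, j + 1, by omega, rfl⟩)
    simpa [PresentedGroup.of, map_mul, map_inv, PresentedGroup.mk] using this
  · have := key _ (Or.inr ⟨i + 1, rfl⟩)
    simpa [PresentedGroup.of, map_mul, map_inv, PresentedGroup.mk] using this

/-- The shift endomorphism `∂ : B_∞ → B_∞`, `σ_i ↦ σ_{i+1}`. -/
noncomputable def shift : BInf →* BInf :=
  PresentedGroup.toGroup (f := fun i => (PresentedGroup.of (i + 1) : BInf)) shift_aux

/-! Expanding both sides of the law, they differ only by the letters `∂²x, ∂²y, ∂²z`, which commute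
with `σ₁`, and by one use of the braid relation `σ₁ · ∂σ₁ · σ₁ = ∂σ₁ · σ₁ · ∂σ₁`. So the law holds
for any group endomorphism `∂` and element `s` with these two properties, and in `B_∞` the element
`σ₁` commutes with the image of `∂²`, which is generated by the `σ_i` with `i ≥ 3`. -/

def shiftedConj {G : Type*} [Group G] (sh : G →* G) (s x y : G) : G :=
  (sh x)⁻¹ * s * sh y * x

theorem shiftedConj_left_distrib {G : Type*} [Group G] (sh : G →* G) (s : G)
    (braid : s * sh s * s = sh s * s * sh s) (comm : ∀ a, Commute s (sh (sh a))) (x y z : G) :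
    shiftedConj sh s x (shiftedConj sh s y z) =
      shiftedConj sh s (shiftedConj sh s x y) (shiftedConj sh s x z) := by
  have braid' (t : G) : (sh s)⁻¹ * (s * (sh s * (s * t))) = s * (sh s * t) := by
    rw [inv_mul_eq_iff_eq_mul]; simp only [← mul_assoc]; rw [braid]
  simp only [shiftedConj, map_mul, map_inv, mul_inv_rev, inv_inv, mul_assoc, mul_inv_cancel_left]
  rw [← (comm x).left_comm, mul_inv_cancel_left, ← (comm z).left_comm, braid',
    (comm y).inv_right.left_comm]

open PresentedGroup

theorem commute_of_of {i j : ℕ} (h : i + 2 ≤ j) : Commute (of i : BInf) (of j) :=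
  commutatorElement_eq_one_iff_commute.mp (one_of_mem (Or.inl ⟨i, j, h, rfl⟩))

theorem of_braid (i : ℕ) : (of i : BInf) * of (i + 1) * of i = of (i + 1) * of i * of (i + 1) :=
  mk_eq_mk_of_mul_inv_mem (Or.inr ⟨i, rfl⟩)

theorem shift_of (i : ℕ) : shift (of i) = of (i + 1) := toGroup.of shift_aux

theorem sigma_one_braid_shift :
    sigma 1 * shift (sigma 1) * sigma 1 = shift (sigma 1) * sigma 1 * shift (sigma 1) :=
  shift_of 0 ▸ of_braid 0

theorem commute_sigma_one_shift_shift (x : BInf) : Commute (sigma 1) (shift (shift x)) := by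
  suffices x ∈ (Subgroup.centralizer {sigma 1}).comap (shift.comp shift) from
    (Subgroup.mem_centralizer_singleton_iff.mp this).symm
  refine generated_by _ _ (fun j => ?_) x
  rw [Subgroup.mem_comap, MonoidHom.comp_apply, shift_of, shift_of,
    Subgroup.mem_centralizer_singleton_iff]
  exact (commute_of_of (by omega)).symm.eq

/-- Shifted conjugacy `x * y = ∂x⁻¹ · σ₁ · ∂y · x` is left self-distributive. -/
theorem shifted_conjugacy_LD (x y z : BInf) :
    (fun a b => (shift a)⁻¹ * sigma 1 * shift b * a) x
        ((fun a b => (shift a)⁻¹ * sigma 1 * shift b * a) y z) =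
      (fun a b => (shift a)⁻¹ * sigma 1 * shift b * a)
        ((fun a b => (shift a)⁻¹ * sigma 1 * shift b * a) x y)
        ((fun a b => (shift a)⁻¹ * sigma 1 * shift b * a) x z) :=
  shiftedConj_left_distrib shift (sigma 1) sigma_one_braid_shift commute_sigma_one_shift_shift x y z
end
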